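/- arXiv:1206.2957 — 4 statements merged into one kernel-verified Lean document; each statement's English description precedes it below -/
import Mathlib

section
/- (Main Theorem.) Let (𝒜, p) be a truthful-in-expectation mechanism and define the payment rule p' by p'_i(v, s) = v_i(𝒜(v, s)) − ∫ (v_i(𝒜(v, t)) − p_i(v, t)) dμ(t). Then (𝒜, p') is dominant-strategy incentive compatible for risk averse players: for every player i, every profile v, every deviation v'_i ∈ 𝒱_i, and every non-decreasing concave function u : ℝ → ℝ (with the composed integrands integrable), ∫ u(v_i(𝒜(v, s)) − p'_i(v, s)) dμ(s) ≥ ∫ u(v_i(𝒜(w, s)) − p'_i(w, s)) dμ(s), where w is v with its i-th coordinate replaced by v'_i. Moreover, ∫ p'_i(v, s) dμ(s) = ∫ p_i(v, s) dμ(s) for every player i and every profile v. -/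
open MeasureTheory

/-- Main Theorem: If `(A, p)` is truthful-in-expectation, then the
transformed mechanism `(A, p')` with
`p'_i(v, s) = v_i(A(v, s)) − E_t[v_i(A(v, t)) − p_i(v, t)]` is dominant-strategy
incentive compatible for risk averse players (any non-decreasing concave utility-for-money
function `u`), and it preserves expected payments. -/
theorem transformed_mechanism_IC_for_risk_averse
    {ι Ω S : Type*} [Fintype ι] [DecidableEq ι]
    [MeasurableSpace S] (μ : Measure S) [IsProbabilityMeasure μ]
    (𝒱 : ι → Set (Ω → ℝ))
    (A : (ι → Ω → ℝ) → S → Ω) (p : ι → (ι → Ω → ℝ) → S → ℝ)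
    (hIntv : ∀ (i : ι) (v w : ι → Ω → ℝ), Integrable (fun s => v i (A w s)) μ)
    (hIntp : ∀ (i : ι) (w : ι → Ω → ℝ), Integrable (fun s => p i w s) μ)
    (hTIE : ∀ (i : ι) (v : ι → Ω → ℝ), (∀ j, v j ∈ 𝒱 j) → ∀ v' ∈ 𝒱 i,
      ∫ s, (v i (A v s) - p i v s) ∂μ ≥
        ∫ s, (v i (A (Function.update v i v') s) - p i (Function.update v i v') s) ∂μ)
    (p' : ι → (ι → Ω → ℝ) → S → ℝ)
    (hp' : ∀ i v s, p' i v s = v i (A v s) - ∫ t, (v i (A v t) - p i v t) ∂μ) :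
    (∀ (i : ι) (v : ι → Ω → ℝ), (∀ j, v j ∈ 𝒱 j) → ∀ v' ∈ 𝒱 i, ∀ u : ℝ → ℝ,
      Monotone u → ConcaveOn ℝ Set.univ u →
      Integrable (fun s => u (v i (A v s) - p' i v s)) μ →
      Integrable (fun s =>
        u (v i (A (Function.update v i v') s) - p' i (Function.update v i v') s)) μ →
      ∫ s, u (v i (A v s) - p' i v s) ∂μ ≥
        ∫ s, u (v i (A (Function.update v i v') s) - p' i (Function.update v i v') s) ∂μ)
    ∧
    (∀ (i : ι) (v : ι → Ω → ℝ), (∀ j, v j ∈ 𝒱 j) →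
      ∫ s, p' i v s ∂μ = ∫ s, p i v s ∂μ) := by
  constructor
  · intro i v hv v' hv' u hu hconc hInt1 hInt2
    set w := Function.update v i v' with hw
    set c : ℝ := ∫ t, (v i (A v t) - p i v t) ∂μ with hc
    -- truthful payoff is the constant c
    have hconst : ∀ s, v i (A v s) - p' i v s = c := by
      intro s; rw [hp']; ring
    have hLHS : ∫ s, u (v i (A v s) - p' i v s) ∂μ = u c := by
      simp only [hconst]
      simp
    -- deviation payoff
    set f : S → ℝ := fun s => v i (A w s) - p' i w s with hf
    have hfeq : f = fun s =>
        v i (A w s) - w i (A w s) + ∫ t, (w i (A w t) - p i w t) ∂μ := by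
      funext s; simp only [hf, hp']; ring
    have h1 := hIntv i v w
    have h2 := hIntv i w w
    have h3 := hIntp i w
    have hfi : Integrable f μ := by
      rw [hfeq]; exact (h1.sub h2).add (integrable_const _)
    have hmean : ∫ s, f s ∂μ ≤ c := by
      have : ∫ s, f s ∂μ = ∫ s, (v i (A w s) - p i w s) ∂μ := by
        rw [hfeq]
        rw [integral_add (μ := μ) (f := fun s => v i (A w s) - w i (A w s))
          (g := fun _ => ∫ t, (w i (A w t) - p i w t) ∂μ) (h1.sub h2)
          (integrable_const _)]
        rw [integral_sub h1 h2, integral_const, integral_sub h2 h3,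
          integral_sub h1 h3]
        simp
      rw [this]
      exact hTIE i v hv v' hv'
    have hInt2' : Integrable (u ∘ f) μ := hInt2
    have hjensen : ∫ s, u (f s) ∂μ ≤ u (∫ s, f s ∂μ) :=
      hconc.le_map_integral (hconc.continuousOn isOpen_univ) isClosed_univ
        (Filter.Eventually.of_forall fun s => Set.mem_univ _) hfi hInt2'
    calc ∫ s, u (v i (A w s) - p' i w s) ∂μ ≤ u (∫ s, f s ∂μ) := hjensen
      _ ≤ u c := hu hmean
      _ = ∫ s, u (v i (A v s) - p' i v s) ∂μ := hLHS.symm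
  · intro i v hv
    have h1 := hIntv i v v
    have h2 := hIntp i v
    have : ∫ s, p' i v s ∂μ =
        ∫ s, (v i (A v s) - ∫ t, (v i (A v t) - p i v t) ∂μ) ∂μ := by
      congr 1; funext s; rw [hp']
    rw [this, integral_sub h1 (integrable_const _), integral_const,
      integral_sub h1 h2]
    simp
end

section
/- (Bayesian version.) Fix a player i with valuation v_i, a probability space (T, ν) whose samples t ∈ T determine both the realized valuations of the other players and the internal coins of the mechanism, an allocation map 𝒜 : 𝒱_i → T → Ω, and payments p : 𝒱_i → T → ℝ, satisfying Bayesian incentive compatibility for risk-neutral player i: for all v_i, v'_i ∈ 𝒱_i, ∫ (v_i(𝒜(v_i, t)) − p(v_i, t)) dν(t) ≥ ∫ (v_i(𝒜(v'_i, t)) − p(v'_i, t)) dν(t). Define p'(v_i, t) = v_i(𝒜(v_i, t)) − ∫ (v_i(𝒜(v_i, t')) − p(v_i, t')) dν(t'). Then: (a) ∫ p'(v_i, t) dν(t) = ∫ p(v_i, t) dν(t) for every report v_i; and (b) for every non-decreasing concave u : ℝ → ℝ and all v_i, v'_i ∈ 𝒱_i (with composed integrands integrable), ∫ u(v_i(𝒜(v_i,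 t)) − p'(v_i, t)) dν(t) ≥ ∫ u(v_i(𝒜(v'_i, t)) − p'(v'_i, t)) dν(t). -/
open MeasureTheory

/-- Bayesian version: Fix a player `i` with valuation set `𝒱`, a probability
space `(T, ν)` modeling both the other players' types and the mechanism's internal coins,
an allocation map `A : 𝒱 → T → Ω` and payments `p : 𝒱 → T → ℝ` satisfying Bayesian
incentive compatibility for the risk-neutral player. Define
`p'(v, t) = v(A(v, t)) − E_{t'}[v(A(v, t')) − p(v, t')]`. Then (a) expected payments are
preserved, and (b) `(A, p')` is Bayesian incentive compatible for any risk averse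
(non-decreasing, concave) utility function `u`. -/
theorem bayesian_transformed_mechanism_IC_for_risk_averse
    {Ω T : Type*} [MeasurableSpace T] (ν : Measure T) [IsProbabilityMeasure ν]
    (𝒱 : Set (Ω → ℝ))
    (A : (Ω → ℝ) → T → Ω) (p : (Ω → ℝ) → T → ℝ)
    (hIntv : ∀ v w : Ω → ℝ, Integrable (fun t => v (A w t)) ν)
    (hIntp : ∀ w : Ω → ℝ, Integrable (fun t => p w t) ν)
    (hBIC : ∀ v ∈ 𝒱, ∀ v' ∈ 𝒱,
      ∫ t, (v (A v t) - p v t) ∂ν ≥ ∫ t, (v (A v' t) - p v' t) ∂ν)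
    (p' : (Ω → ℝ) → T → ℝ)
    (hp' : ∀ v t, p' v t = v (A v t) - ∫ t', (v (A v t') - p v t') ∂ν) :
    (∀ v ∈ 𝒱, ∫ t, p' v t ∂ν = ∫ t, p v t ∂ν)
    ∧
    (∀ u : ℝ → ℝ, Monotone u → ConcaveOn ℝ Set.univ u →
      ∀ v ∈ 𝒱, ∀ v' ∈ 𝒱,
      Integrable (fun t => u (v (A v t) - p' v t)) ν →
      Integrable (fun t => u (v (A v' t) - p' v' t)) ν →
      ∫ t, u (v (A v t) - p' v t) ∂ν ≥ ∫ t, u (v (A v' t) - p' v' t) ∂ν) := by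
  have key : ∀ v : Ω → ℝ, ∀ t, v (A v t) - p' v t = ∫ t', (v (A v t') - p v t') ∂ν := by
    intro v t; rw [hp' v t]; ring
  constructor
  · intro v hv
    have : ∀ t, p' v t = v (A v t) - ∫ t', (v (A v t') - p v t') ∂ν := hp' v
    calc ∫ t, p' v t ∂ν = ∫ t, (v (A v t) - ∫ t', (v (A v t') - p v t') ∂ν) ∂ν := by
          simp_rw [this]
      _ = ∫ t, v (A v t) ∂ν - ∫ t', (v (A v t') - p v t') ∂ν := by
          rw [integral_sub (hIntv v v) (integrable_const _), integral_const, probReal_univ,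
            one_smul]
      _ = ∫ t, p v t ∂ν := by
          rw [integral_sub (hIntv v v) (hIntp v)]; ring
  · intro u hu hcu v hv v' hv' hInt1 hInt2
    -- LHS is the integral of a constant
    have hLHS : ∫ t, u (v (A v t) - p' v t) ∂ν = u (∫ t', (v (A v t') - p v t') ∂ν) := by
      simp_rw [key v]
      rw [integral_const, probReal_univ, one_smul]
    -- RHS integrand and its integral
    have hfi : Integrable (fun t => v (A v' t) - p' v' t) ν := by
      have : (fun t => v (A v' t) - p' v' t)
          = fun t => v (A v' t) - v' (A v' t) + ∫ t', (v' (A v' t') - p v' t') ∂ν := by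
        funext t; rw [hp' v' t]; ring
      rw [this]
      exact (((hIntv v v').sub (hIntv v' v')).add (integrable_const _))
    have hint_eq : ∫ t, (v (A v' t) - p' v' t) ∂ν = ∫ t, (v (A v' t) - p v' t) ∂ν := by
      have h1 : ∫ t, (v (A v' t) - p' v' t) ∂ν
          = ∫ t, v (A v' t) ∂ν - ∫ t, p' v' t ∂ν :=
        integral_sub (hIntv v v') (by
          have : Integrable (fun t => p' v' t) ν := by
            have : (fun t => p' v' t)
                = fun t => v' (A v' t) - ∫ t', (v' (A v' t') - p v' t') ∂ν := by
              funext t; exact hp' v' t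
            rw [this]; exact (hIntv v' v').sub (integrable_const _)
          exact this)
      have h2 : ∫ t, p' v' t ∂ν = ∫ t, p v' t ∂ν := by
        calc ∫ t, p' v' t ∂ν
            = ∫ t, (v' (A v' t) - ∫ t', (v' (A v' t') - p v' t') ∂ν) ∂ν := by
              simp_rw [hp']
          _ = ∫ t, v' (A v' t) ∂ν - ∫ t', (v' (A v' t') - p v' t') ∂ν := by
              rw [integral_sub (hIntv v' v') (integrable_const _), integral_const, probReal_univ,
                one_smul]
          _ = ∫ t, p v' t ∂ν := by
              rw [integral_sub (hIntv v' v') (hIntp v')]; ring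
      rw [h1, h2, integral_sub (hIntv v v') (hIntp v')]
    -- Jensen
    have hJensen : ∫ t, u (v (A v' t) - p' v' t) ∂ν
        ≤ u (∫ t, (v (A v' t) - p' v' t) ∂ν) := by
      have hcont : ContinuousOn u Set.univ := hcu.continuousOn isOpen_univ
      exact hcu.le_map_integral hcont isClosed_univ
        (Filter.Eventually.of_forall fun t => Set.mem_univ _) hfi hInt2
    have hBICineq : ∫ t, (v (A v' t) - p v' t) ∂ν ≤ ∫ t', (v (A v t') - p v t') ∂ν :=
      hBIC v hv v' hv'
    calc ∫ t, u (v (A v' t) - p' v' t) ∂ν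
        ≤ u (∫ t, (v (A v' t) - p' v' t) ∂ν) := hJensen
      _ = u (∫ t, (v (A v' t) - p v' t) ∂ν) := by rw [hint_eq]
      _ ≤ u (∫ t', (v (A v t') - p v t') ∂ν) := hu hBICineq
      _ = ∫ t, u (v (A v t) - p' v t) ∂ν := hLHS.symm
end

section
/- The transformation only increases agents' utilities at truthful reporting: let (𝒜, p) be a mechanism, and define p'_i(v, s) = v_i(𝒜(v, s)) − ∫ (v_i(𝒜(v, t)) − p_i(v, t)) dμ(t). Then for every player i, every profile v, and every non-decreasing concave u : ℝ → ℝ with s ↦ u(v_i(𝒜(v, s)) − p_i(v, s)) integrable, ∫ u(v_i(𝒜(v, s)) − p'_i(v, s)) dμ(s) ≥ ∫ u(v_i(𝒜(v, s)) − p_i(v, s)) dμ(s). -/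
open MeasureTheory

/-- The transformation only increases agents' utilities at truthful
reporting: with `p'_i(v, s) = v_i(A(v, s)) − E_t[v_i(A(v, t)) − p_i(v, t)]`, for every
player `i`, profile `v`, and every non-decreasing concave `u : ℝ → ℝ` with
`s ↦ u(v_i(A(v, s)) − p_i(v, s))` integrable, the expected `u`-utility under `p'` is at
least that under `p`. -/
theorem transformation_only_increases_utilities
    {ι Ω S : Type*} [Fintype ι] [DecidableEq ι]
    [MeasurableSpace S] (μ : Measure S) [IsProbabilityMeasure μ]
    (𝒱 : ι → Set (Ω → ℝ))
    (A : (ι → Ω → ℝ) → S → Ω) (p : ι → (ι → Ω → ℝ) → S → ℝ)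
    (hIntv : ∀ (i : ι) (v w : ι → Ω → ℝ), Integrable (fun s => v i (A w s)) μ)
    (hIntp : ∀ (i : ι) (w : ι → Ω → ℝ), Integrable (fun s => p i w s) μ)
    (p' : ι → (ι → Ω → ℝ) → S → ℝ)
    (hp' : ∀ i v s, p' i v s = v i (A v s) - ∫ t, (v i (A v t) - p i v t) ∂μ)
    (i : ι) (v : ι → Ω → ℝ) (hv : ∀ j, v j ∈ 𝒱 j)
    (u : ℝ → ℝ) (hu : Monotone u) (huc : ConcaveOn ℝ Set.univ u)
    (hInt : Integrable (fun s => u (v i (A v s) - p i v s)) μ) :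
    ∫ s, u (v i (A v s) - p' i v s) ∂μ ≥ ∫ s, u (v i (A v s) - p i v s) ∂μ := by
  have hcont : ContinuousOn u Set.univ := by
    have := huc.continuousOn (isOpen_univ) (E := ℝ)
    exact this
  have hfi : Integrable (fun s => v i (A v s) - p i v s) μ :=
    (hIntv i v v).sub (hIntp i v)
  have hjensen : (∫ s, u (v i (A v s) - p i v s) ∂μ) ≤ u (∫ s, (v i (A v s) - p i v s) ∂μ) :=
    huc.le_map_integral hcont isClosed_univ
      (Filter.Eventually.of_forall fun _ => Set.mem_univ _) hfi hInt
  have heq : ∀ s, v i (A v s) - p' i v s = ∫ t, (v i (A v t) - p i v t) ∂μ := by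
    intro s; rw [hp' i v s]; ring
  calc ∫ s, u (v i (A v s) - p i v s) ∂μ
      ≤ u (∫ t, (v i (A v t) - p i v t) ∂μ) := hjensen
    _ = ∫ s, u (v i (A v s) - p' i v s) ∂μ := by
        simp only [heq, integral_const, measure_univ, ENNReal.toReal_one, probReal_univ, one_smul]
end

section
/- (Approximately incentive compatible transformation.) Let (𝒜, p) be a truthful-in-expectation mechanism and let ε ∈ [0, 1]. For each player i, suppose the true expected payoff m_i(v) := ∫ (v_i(𝒜(v, s)) − p_i(v, s)) dμ(s) is nonnegative for every profile v, and suppose m̂_i : (Π_j 𝒱_j) → ℝ satisfies (1 − ε)·m_i(v) ≤ m̂_i(v) ≤ m_i(v) and m̂_i(v) ≥ 0 for every profile v. Define p̂_i(v, s) = v_i(𝒜(v, s)) − m̂_i(v). Then (𝒜, p̂) is (1 − ε)-approximately incentive compatible for risk averse players: for every player i, every profile v, every deviation v'_i ∈ 𝒱_i, and every non-decreasing concave u : ℝ → ℝ with u(0) ≥ 0, ∫ u(v_i(𝒜(v, s)) − p̂_i(v, s)) dμ(s) ≥ (1 − ε) · ∫ u(v_i(𝒜(w, s)) − p̂_i(w,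 s)) dμ(s), where w is v with its i-th coordinate replaced by v'_i. -/
open MeasureTheory

/-- Approximately incentive compatible transformation: Let `(A, p)` be
truthful-in-expectation and `ε ∈ [0, 1]`. If each player's true expected payoff
`m_i(v) = E_s[v_i(A(v, s)) − p_i(v, s)]` is nonnegative and `mhat_i` satisfies
`(1 − ε)·m_i(v) ≤ mhat_i(v) ≤ m_i(v)` and `mhat_i(v) ≥ 0`, then the mechanism `(A, phat)` with
`phat_i(v, s) = v_i(A(v, s)) − mhat_i(v)` is `(1 − ε)`-approximately incentive compatible for
risk averse players with non-decreasing concave `u : ℝ → ℝ` satisfying `u(0) ≥ 0`. -/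
theorem approx_IC_for_risk_averse
    {ι Ω S : Type*} [Fintype ι] [DecidableEq ι]
    [MeasurableSpace S] (μ : Measure S) [IsProbabilityMeasure μ]
    (𝒱 : ι → Set (Ω → ℝ))
    (A : (ι → Ω → ℝ) → S → Ω) (p : ι → (ι → Ω → ℝ) → S → ℝ)
    (hIntv : ∀ (i : ι) (v w : ι → Ω → ℝ), Integrable (fun s => v i (A w s)) μ)
    (hIntp : ∀ (i : ι) (w : ι → Ω → ℝ), Integrable (fun s => p i w s) μ)
    (hTIE : ∀ (i : ι) (v : ι → Ω → ℝ), (∀ j, v j ∈ 𝒱 j) → ∀ v' ∈ 𝒱 i,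
      ∫ s, (v i (A v s) - p i v s) ∂μ ≥
        ∫ s, (v i (A (Function.update v i v') s) - p i (Function.update v i v') s) ∂μ)
    (ε : ℝ) (hε0 : 0 ≤ ε) (hε1 : ε ≤ 1)
    (m : ι → (ι → Ω → ℝ) → ℝ)
    (hm : ∀ i v, m i v = ∫ s, (v i (A v s) - p i v s) ∂μ)
    (hm0 : ∀ (i : ι) (v : ι → Ω → ℝ), (∀ j, v j ∈ 𝒱 j) → 0 ≤ m i v)
    (mhat : ι → (ι → Ω → ℝ) → ℝ)
    (hmhatlb : ∀ (i : ι) (v : ι → Ω → ℝ), (∀ j, v j ∈ 𝒱 j) → (1 - ε) * m i v ≤ mhat i v)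
    (hmhatub : ∀ (i : ι) (v : ι → Ω → ℝ), (∀ j, v j ∈ 𝒱 j) → mhat i v ≤ m i v)
    (hmhat0 : ∀ (i : ι) (v : ι → Ω → ℝ), (∀ j, v j ∈ 𝒱 j) → 0 ≤ mhat i v)
    (phat : ι → (ι → Ω → ℝ) → S → ℝ)
    (hphat : ∀ i v s, phat i v s = v i (A v s) - mhat i v)
    (i : ι) (v : ι → Ω → ℝ) (hv : ∀ j, v j ∈ 𝒱 j) (v' : Ω → ℝ) (hv' : v' ∈ 𝒱 i)
    (u : ℝ → ℝ) (hu : Monotone u) (huc : ConcaveOn ℝ Set.univ u) (hu0 : 0 ≤ u 0)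
    (hInt₁ : Integrable (fun s => u (v i (A v s) - phat i v s)) μ)
    (hInt₂ : Integrable (fun s =>
      u (v i (A (Function.update v i v') s) - phat i (Function.update v i v') s)) μ) :
    ∫ s, u (v i (A v s) - phat i v s) ∂μ ≥
      (1 - ε) *
        ∫ s, u (v i (A (Function.update v i v') s) - phat i (Function.update v i v') s) ∂μ := by
  set w : ι → Ω → ℝ := Function.update v i v' with hw
  have hwV : ∀ j, w j ∈ 𝒱 j := by
    intro j
    rcases eq_or_ne j i with rfl | hji
    · simpa [hw] using hv'
    · simpa [hw, Function.update_of_ne hji] using hv j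
  -- LHS is constant
  have hLHS : ∫ s, u (v i (A v s) - phat i v s) ∂μ = u (mhat i v) := by
    have : ∀ s, v i (A v s) - phat i v s = mhat i v := by
      intro s; rw [hphat]; ring
    simp [this]
  -- the deviation payoff
  have hX : ∀ s, v i (A w s) - phat i w s = v i (A w s) - w i (A w s) + mhat i w := by
    intro s; rw [hphat]; ring
  set X : S → ℝ := fun s => v i (A w s) - w i (A w s) + mhat i w with hXdef
  have hXint : Integrable X μ :=
    (((hIntv i v w).sub (hIntv i w w)).add (integrable_const _) :)
  -- Jensen
  have hJensen : ∫ s, u (X s) ∂μ ≤ u (∫ s, X s ∂μ) := by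
    refine huc.le_map_integral (huc.continuousOn isOpen_univ) isClosed_univ
      (Filter.Eventually.of_forall fun _ => Set.mem_univ _) hXint ?_
    have : (u ∘ X) = fun s => u (v i (A w s) - phat i w s) := by
      funext s; simp [Function.comp, hX s, hXdef]
    rw [this]; exact hInt₂
  have hI1 : Integrable (fun s => v i (A w s) - w i (A w s)) μ :=
    (hIntv i v w).sub (hIntv i w w)
  have hI2 : Integrable (fun s => w i (A w s) - p i w s) μ :=
    (hIntv i w w).sub (hIntp i w)
  have hXmean : ∫ s, X s ∂μ ≤ m i v := by
    have h1 : ∫ s, X s ∂μ = ∫ s, (v i (A w s) - w i (A w s)) ∂μ + mhat i w := by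
      rw [hXdef, integral_add hI1 (integrable_const _)]
      simp
    have h2 : mhat i w ≤ ∫ s, (w i (A w s) - p i w s) ∂μ := by
      rw [← hm]; exact hmhatub i w hwV
    have h3 : ∫ s, X s ∂μ ≤ ∫ s, (v i (A w s) - w i (A w s)) ∂μ +
        ∫ s, (w i (A w s) - p i w s) ∂μ := by
      rw [h1]; linarith
    have h4 : ∫ s, (v i (A w s) - w i (A w s)) ∂μ + ∫ s, (w i (A w s) - p i w s) ∂μ
        = ∫ s, (v i (A w s) - p i w s) ∂μ := by
      rw [← integral_add hI1 hI2]
      congr 1; funext s; ring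
    have h5 := hTIE i v hv v' hv'
    rw [← hw] at h5
    rw [← hm i v] at h5
    linarith
  -- chain
  have hum : ∫ s, u (v i (A w s) - phat i w s) ∂μ ≤ u (m i v) := by
    have : ∫ s, u (v i (A w s) - phat i w s) ∂μ = ∫ s, u (X s) ∂μ := by
      congr 1; funext s; rw [hX s]
    rw [this]
    exact hJensen.trans (hu hXmean)
  have hconc : (1 - ε) * u (m i v) ≤ u (mhat i v) := by
    have key : (1 - ε) * u (m i v) + ε * u 0 ≤ u ((1 - ε) * m i v + ε * 0) := by
      have := huc.2 (Set.mem_univ (m i v)) (Set.mem_univ (0 : ℝ))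
        (by linarith : (0:ℝ) ≤ 1 - ε) hε0 (by ring)
      simpa [smul_eq_mul] using this
    have hmono : u ((1 - ε) * m i v + ε * 0) ≤ u (mhat i v) := by
      apply hu
      have := hmhatlb i v hv
      linarith
    nlinarith
  rw [hLHS]
  calc (1 - ε) * ∫ s, u (v i (A w s) - phat i w s) ∂μ
      ≤ (1 - ε) * u (m i v) := by
        apply mul_le_mul_of_nonneg_left hum (by linarith)
    _ ≤ u (mhat i v) := hconc
end
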